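/- With c = 783/1000, one has q₂(783/1000) = 2500π/(3481π − 10000) > q₁(783/1000) > 3, where q₁(c) = π/(4(√(1−c²) − c·arccos c)) and q₂(c) = 5/(2(7c − 2 − 10/π)). -/
import Mathlib


open Real

noncomputable def q₁ (c : ℝ) : ℝ := π / (4 * (Real.sqrt (1 - c^2) - c * Real.arccos c))

noncomputable def q₂ (c : ℝ) : ℝ := 5 / (2 * (7 * c - 2 - 10 / π))

lemma cos_672_lt : Real.cos (672/1000) < 783/1000 := by
  have h2 : Real.cos (336/1000) = 2 * Real.cos (168/1000) ^ 2 - 1 := by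
    rw [← Real.cos_two_mul]; norm_num
  have h4 : Real.cos (672/1000) = 2 * Real.cos (336/1000) ^ 2 - 1 := by
    rw [← Real.cos_two_mul]; norm_num
  have hb := Real.cos_bound (x := 168/1000) (by rw [abs_of_nonneg] <;> norm_num)
  have habs : |(168/1000:ℝ)| = 168/1000 := abs_of_nonneg (by norm_num)
  rw [habs, abs_le] at hb
  obtain ⟨hb1, hb2⟩ := hb
  have hK1 : Real.cos (168/1000) ≤ 98593/100000 := by nlinarith
  have hK0 : (98584/100000 : ℝ) ≤ Real.cos (168/1000) := by nlinarith
  have hM1 : Real.cos (336/1000) ≤ 944118/1000000 := by nlinarith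
  have hM0 : (943760/1000000:ℝ) ≤ Real.cos (336/1000) := by nlinarith
  nlinarith

lemma cos_half_gt : (783/1000 : ℝ) < Real.cos (1/2) := by
  have hb := Real.cos_bound (x := 1/2) (by rw [abs_of_nonneg] <;> norm_num)
  have habs : |(1/2:ℝ)| = 1/2 := abs_of_nonneg (by norm_num)
  rw [habs, abs_le] at hb
  obtain ⟨hb1, hb2⟩ := hb
  nlinarith

lemma arccos_lt : Real.arccos (783/1000) < 672/1000 := by
  by_contra h
  push_neg at h
  have := Real.cos_le_cos_of_nonneg_of_le_pi (by norm_num : (0:ℝ) ≤ 672/1000)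
    (Real.arccos_le_pi _) h
  rw [Real.cos_arccos (by norm_num) (by norm_num)] at this
  linarith [cos_672_lt]

lemma arccos_gt : (1/2 : ℝ) < Real.arccos (783/1000) := by
  by_contra h
  push_neg at h
  have := Real.cos_le_cos_of_nonneg_of_le_pi (Real.arccos_nonneg _)
    (by nlinarith [Real.pi_gt_d6] : (1/2:ℝ) ≤ π) h
  rw [Real.cos_arccos (by norm_num) (by norm_num)] at this
  linarith [cos_half_gt]

lemma sqrt_lb : (622021/1000000 : ℝ) < Real.sqrt (1 - (783/1000)^2) := by
  have h : (1 - (783/1000:ℝ)^2) = 386911/1000000 := by norm_num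
  rw [h, show (622021/1000000:ℝ) = Real.sqrt ((622021/1000000)^2) from
    (Real.sqrt_sq (by norm_num)).symm]
  apply Real.sqrt_lt_sqrt (by positivity)
  norm_num

lemma sqrt_ub : Real.sqrt (1 - (783/1000)^2) < 622022/1000000 := by
  have h : (1 - (783/1000:ℝ)^2) = 386911/1000000 := by norm_num
  rw [h, show (622022/1000000:ℝ) = Real.sqrt ((622022/1000000)^2) from
    (Real.sqrt_sq (by norm_num)).symm]
  apply Real.sqrt_lt_sqrt (by norm_num)
  norm_num

theorem q2_val_and_bounds :
    q₂ (783/1000) = 2500 * π / (3481 * π - 10000) ∧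
      q₁ (783/1000) < q₂ (783/1000) ∧ 3 < q₁ (783/1000) := by
  have hπl := Real.pi_gt_d6
  have hπu := Real.pi_lt_d6
  have hπ0 : (0:ℝ) < π := Real.pi_pos
  have hden : (0:ℝ) < 3481 * π - 10000 := by nlinarith
  have hDlb : (95845/1000000 : ℝ) <
      Real.sqrt (1 - (783/1000)^2) - 783/1000 * Real.arccos (783/1000) := by
    nlinarith [sqrt_lb, arccos_lt]
  have hDub : Real.sqrt (1 - (783/1000)^2) - 783/1000 * Real.arccos (783/1000)
      < 231023/1000000 := by
    nlinarith [sqrt_ub, arccos_gt]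
  have h10 : 10 / π < 319/100 := by
    rw [div_lt_iff₀ hπ0]; nlinarith
  have h10' : 318/100 < 10 / π := by
    rw [lt_div_iff₀ hπ0]; nlinarith
  have hden2 : (0:ℝ) < 2 * (7 * (783/1000) - 2 - 10 / π) := by linarith
  have hq2 : q₂ (783/1000) = 2500 * π / (3481 * π - 10000) := by
    unfold q₂
    rw [div_eq_div_iff hden2.ne' hden.ne']
    field_simp
    ring
  refine ⟨hq2, ?_, ?_⟩
  · rw [hq2]
    unfold q₁
    rw [div_lt_div_iff₀ (by linarith) hden]
    nlinarith [mul_pos hπ0 hden]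
  · unfold q₁
    rw [lt_div_iff₀ (by linarith)]
    linarith
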